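/- arXiv:1905.00975 — 4 statements merged into one kernel-verified Lean document; each statement's English description precedes it below -/
import Mathlib

section
/- Let λ/ν be a skew partition of n with max hook length less than 0.8n, and let d be a positive integer. Then n^{d+1}/(26(d+1)) − 2·(0.8)^d·n^d < sum_{j=1}^{n} j^d − sum_{c ∈ λ/ν} h_c^d < n^{d+1}/(d+1) + n^d. -/
open Finset

/-- The cells of the skew shape `μ/ν`. -/
def skewCells (μ ν : YoungDiagram) : Finset (ℕ × ℕ) := μ.cells \ ν.cells

/-- The hook length of a cell `c` in the skew shape `μ/ν`: the number of cells of
`μ/ν` in the row of `c` weakly to its right, plus the number strictly below `c`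
in its column. -/
def hookLen (μ ν : YoungDiagram) (c : ℕ × ℕ) : ℕ :=
  ((skewCells μ ν).filter (fun x => x.1 = c.1 ∧ c.2 ≤ x.2)).card +
    ((skewCells μ ν).filter (fun x => x.2 = c.2 ∧ c.1 < x.1)).card

/-- `T` is a reverse standard Young tableau of the skew shape `μ/ν`: a bijective
filling of the cells by `1, …, n` which strictly decreases along rows (left to right)
and down columns. -/
def IsRSYT (μ ν : YoungDiagram) (T : ℕ × ℕ → ℕ) : Prop :=
  Set.BijOn T (skewCells μ ν : Set (ℕ × ℕ)) (Set.Icc 1 (skewCells μ ν).card) ∧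
    ∀ c ∈ skewCells μ ν, ∀ c' ∈ skewCells μ ν,
      ((c.1 = c'.1 ∧ c.2 < c'.2) ∨ (c.2 = c'.2 ∧ c.1 < c'.1)) → T c' < T c

/-! A reverse standard Young tableau `T` of `μ/ν` dominates the hook lengths, `h_c ≤ T c`, since
`T` maps the hook of `c` injectively into `{1, …, T c}`; ranking the cells from the end of the
lexicographic order gives such a tableau. As `T` is a bijection onto `{1, …, n}` and every
`h_c^d` is below the cap `(0.8 n)^d`, the hook power sum is at most `∑_{j ≤ n} min((0.8 n)^d, j^d)`.
So the difference is at least `∑_{0.8 n < j ≤ n} (j^d - (0.8 n)^d)`, which an integral comparison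
bounds below by `(n^{d+1} - (0.8 n)^{d+1})/(d+1) - (0.2 n + 1)(0.8 n)^d`; the claimed bound then
reduces to `0.8^d (d + 5) ≤ 4.8`. The upper bound is `∑_{j ≤ n} j^d ≤ n^{d+1}/(d+1) + n^d`
together with `h_c ≥ 1`. -/

theorem Finset.card_filter_le_lt_card_filter_le {α : Type*} [LinearOrder α] {s : Finset α}
    {a b : α} (ha : a ∈ s) (hab : a < b) : #{x ∈ s | b ≤ x} < #{x ∈ s | a ≤ x} :=
  card_lt_card <| (ssubset_iff_of_subset fun x hx => by
      simp only [mem_filter] at hx ⊢; exact ⟨hx.1, hab.le.trans hx.2⟩).2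
    ⟨a, by simp [ha], by simp [hab]⟩

theorem Finset.bijOn_card_filter_le {α : Type*} [LinearOrder α] (s : Finset α) :
    Set.BijOn (fun a => #{x ∈ s | a ≤ x}) s (Set.Icc 1 #s) := by
  have hinj : Set.InjOn (fun a => #{x ∈ s | a ≤ x}) s := fun a ha b hb hab => by
    by_contra hne
    rcases lt_or_gt_of_ne hne with h | h
    · exact (card_filter_le_lt_card_filter_le ha h).ne hab.symm
    · exact (card_filter_le_lt_card_filter_le hb h).ne hab
  have hmaps : Set.MapsTo (fun a => #{x ∈ s | a ≤ x}) s (Icc 1 #s) := fun a ha =>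
    mem_Icc.2 ⟨card_pos.2 ⟨a, mem_filter.2 ⟨ha, le_rfl⟩⟩, card_filter_le _ _⟩
  rw [← coe_Icc]
  exact ⟨hmaps, hinj, surjOn_of_injOn_of_card_le _ hmaps hinj (by simp)⟩

theorem exists_isRSYT (μ ν : YoungDiagram) : ∃ T, IsRSYT μ ν T := by
  let s : Finset (ℕ ×ₗ ℕ) := (skewCells μ ν).map toLex.toEmbedding
  refine ⟨fun c => #{x ∈ s | toLex c ≤ x}, ?_, fun c hc c' _ h => ?_⟩
  · have hlex : Set.BijOn toLex (skewCells μ ν : Set (ℕ × ℕ)) s := by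
      simpa [s] using toLex.injective.injOn.bijOn_image
    have := (bijOn_card_filter_le s).comp hlex
    rwa [card_map] at this
  · refine card_filter_le_lt_card_filter_le (mem_map_of_mem _ hc) ?_
    simp only [Prod.Lex.toLex_lt_toLex]
    omega

theorem IsRSYT.hookLen_le {μ ν : YoungDiagram} {T : ℕ × ℕ → ℕ} (hT : IsRSYT μ ν T)
    {c : ℕ × ℕ} (hc : c ∈ skewCells μ ν) : hookLen μ ν c ≤ T c := by
  set row := {x ∈ skewCells μ ν | x.1 = c.1 ∧ c.2 ≤ x.2}
  set col := {x ∈ skewCells μ ν | x.2 = c.2 ∧ c.1 < x.1}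
  have hdisj : Disjoint row col := disjoint_filter.2 fun x _ h₁ h₂ => by omega
  calc hookLen μ ν c = #(row ∪ col) := (card_union_of_disjoint hdisj).symm
    _ ≤ #(Icc 1 (T c)) := by
        have hsub : row ∪ col ⊆ skewCells μ ν :=
          union_subset (filter_subset _ _) (filter_subset _ _)
        refine card_le_card_of_injOn T (fun x (hx : x ∈ row ∪ col) => ?_)
          (hT.1.injOn.mono (coe_subset.2 hsub))
        have hTx : T x ≤ T c := by
          rcases eq_or_ne x c with rfl | hxc
          · exact le_rfl
          · refine (hT.2 c hc x (hsub hx) ?_).le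
            simp only [row, col, mem_union, mem_filter] at hx
            rw [Ne, Prod.ext_iff] at hxc
            omega
        exact mem_Icc.2 ⟨(hT.1.mapsTo (hsub hx)).1, hTx⟩
    _ = T c := Nat.card_Icc 1 (T c)

theorem one_le_hookLen {μ ν : YoungDiagram} {c : ℕ × ℕ} (hc : c ∈ skewCells μ ν) :
    1 ≤ hookLen μ ν c :=
  Nat.le_add_right_of_le <| card_pos.2 ⟨c, by simp [hc]⟩

theorem IsRSYT.sum_le_sum_Icc {β : Type*} [AddCommMonoid β] [PartialOrder β]
    [IsOrderedAddMonoid β] {μ ν : YoungDiagram} {T : ℕ × ℕ → ℕ} (hT : IsRSYT μ ν T)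
    {g : ℕ → β} (hg : Monotone g) :
    ∑ c ∈ skewCells μ ν, g (hookLen μ ν c) ≤ ∑ j ∈ Icc 1 #(skewCells μ ν), g j :=
  calc ∑ c ∈ skewCells μ ν, g (hookLen μ ν c) ≤ ∑ c ∈ skewCells μ ν, g (T c) :=
        sum_le_sum fun c hc => hg (hT.hookLen_le hc)
    _ = ∑ j ∈ Icc 1 #(skewCells μ ν), g j :=
        sum_nbij T (fun a ha => by simpa using hT.1.mapsTo ha) hT.1.injOn
          (by simpa using hT.1.surjOn) fun _ _ => rfl

theorem sum_range_pow_le (n d : ℕ) :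
    ∑ j ∈ range n, (j : ℝ) ^ d ≤ (n : ℝ) ^ (d + 1) / (d + 1) := by
  have hmono : MonotoneOn (fun x : ℝ => x ^ d) (Set.Icc ((0 : ℕ) : ℝ) n) := fun x hx y _ hxy =>
    pow_le_pow_left₀ (by simpa using hx.1) hxy d
  simpa [integral_pow] using hmono.sum_le_integral_Ico (Nat.zero_le n)

theorem sum_Icc_pow_le (n d : ℕ) :
    ∑ j ∈ Icc 1 n, (j : ℝ) ^ d ≤ (n : ℝ) ^ (d + 1) / (d + 1) + (n : ℝ) ^ d := by
  calc ∑ j ∈ Icc 1 n, (j : ℝ) ^ d ≤ ∑ j ∈ range (n + 1), (j : ℝ) ^ d :=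
        sum_le_sum_of_subset_of_nonneg (fun j hj => by simp at hj ⊢; omega)
          fun _ _ _ => by positivity
    _ ≤ _ := by rw [sum_range_succ]; gcongr; exact sum_range_pow_le n d

theorem sub_div_le_sum_Ioc_pow {m n : ℕ} (hmn : m ≤ n) (d : ℕ) :
    ((n : ℝ) ^ (d + 1) - (m : ℝ) ^ (d + 1)) / (d + 1) ≤ ∑ j ∈ Ioc m n, (j : ℝ) ^ d := by
  have hmono : MonotoneOn (fun x : ℝ => x ^ d) (Set.Icc (m : ℝ) n) := fun x hx y _ hxy =>
    pow_le_pow_left₀ ((Nat.cast_nonneg m).trans hx.1) hxy d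
  rw [← Ico_add_one_add_one_eq_Ioc, ← sum_Ico_add' (c := 1), ← integral_pow]
  simpa using hmono.integral_le_sum_Ico hmn

theorem sub_div_sub_le_sum_Icc_pow_sub_min {n : ℕ} {a : ℝ} (ha : 0 ≤ a) (han : a ≤ n) (d : ℕ) :
    ((n : ℝ) ^ (d + 1) - a ^ (d + 1)) / (d + 1) - (n - a + 1) * a ^ d ≤
      ∑ j ∈ Icc 1 n, ((j : ℝ) ^ d - min (a ^ d) ((j : ℝ) ^ d)) := by
  set m := ⌊a⌋₊
  have hmn : m ≤ n := Nat.floor_le_of_le han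
  have hma : (m : ℝ) ≤ a := Nat.floor_le ha
  have ham : a < m + 1 := Nat.lt_floor_add_one a
  calc ((n : ℝ) ^ (d + 1) - a ^ (d + 1)) / (d + 1) - (n - a + 1) * a ^ d
      ≤ ((n : ℝ) ^ (d + 1) - (m : ℝ) ^ (d + 1)) / (d + 1) - (n - m) * a ^ d := by
        gcongr
        linarith
    _ ≤ ∑ j ∈ Ioc m n, ((j : ℝ) ^ d - a ^ d) := by
        rw [sum_sub_distrib, sum_const, Nat.card_Ioc, nsmul_eq_mul, Nat.cast_sub hmn]
        gcongr
        exact sub_div_le_sum_Ioc_pow hmn d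
    _ ≤ ∑ j ∈ Ioc m n, ((j : ℝ) ^ d - min (a ^ d) ((j : ℝ) ^ d)) :=
        sum_le_sum fun j _ => by gcongr; exact min_le_left _ _
    _ ≤ ∑ j ∈ Icc 1 n, ((j : ℝ) ^ d - min (a ^ d) ((j : ℝ) ^ d)) :=
        sum_le_sum_of_subset_of_nonneg (fun j hj => by simp at hj ⊢; omega)
          fun j _ _ => sub_nonneg.2 (min_le_right _ _)

theorem four_fifths_pow_mul_le {d : ℕ} (hd : 1 ≤ d) : (0.8 : ℝ) ^ d * (d + 5) ≤ 4.8 := by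
  induction d, hd using Nat.le_induction with
  | base => norm_num
  | succ d _ ih =>
    have : (0 : ℝ) ≤ 0.8 ^ d := by positivity
    push_cast
    rw [pow_succ]
    nlinarith

theorem lower_bound_four_fifths {d : ℕ} (hd : 1 ≤ d) {x : ℝ} (hx : 0 < x) :
    x ^ (d + 1) / (26 * (d + 1)) - 2 * 0.8 ^ d * x ^ d <
      (x ^ (d + 1) - (0.8 * x) ^ (d + 1)) / (d + 1) - (x - 0.8 * x + 1) * (0.8 * x) ^ d := by
  have hp := four_fifths_pow_mul_le hd
  have key : ((x ^ (d + 1) - (0.8 * x) ^ (d + 1)) / (d + 1) - (x - 0.8 * x + 1) * (0.8 * x) ^ d) -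
      (x ^ (d + 1) / (26 * (d + 1)) - 2 * 0.8 ^ d * x ^ d) =
      (x ^ d * x * (25 - 5.2 * (0.8 ^ d * (d + 5))) + 26 * (d + 1) * 0.8 ^ d * x ^ d) /
        (26 * (d + 1)) := by
    field_simp
    ring
  have : 0 < (x ^ d * x * (25 - 5.2 * (0.8 ^ d * (d + 5))) + 26 * (d + 1) * 0.8 ^ d * x ^ d) /
        (26 * (d + 1)) := by
    have : (0 : ℝ) ≤ 25 - 5.2 * (0.8 ^ d * (d + 5)) := by linarith
    positivity
  linarith

theorem power_sum_hook_difference_bounds_general (μ ν : YoungDiagram)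
    (n : ℕ) (hn : n = (skewCells μ ν).card) (hn1 : 1 ≤ n)
    (hmax : ∀ c ∈ skewCells μ ν, (hookLen μ ν c : ℝ) < 0.8 * n) (d : ℕ) (hd : 1 ≤ d) :
    (n : ℝ) ^ (d + 1) / (26 * (d + 1)) - 2 * (0.8 : ℝ) ^ d * (n : ℝ) ^ d <
        (∑ j ∈ Finset.Icc 1 n, (j : ℝ) ^ d) - ∑ c ∈ skewCells μ ν, (hookLen μ ν c : ℝ) ^ d ∧
      (∑ j ∈ Finset.Icc 1 n, (j : ℝ) ^ d) - ∑ c ∈ skewCells μ ν, (hookLen μ ν c : ℝ) ^ d <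
        (n : ℝ) ^ (d + 1) / (d + 1) + (n : ℝ) ^ d := by
  have hn_one : (1 : ℝ) ≤ n := by exact_mod_cast hn1
  obtain ⟨T, hT⟩ := exists_isRSYT μ ν
  set P := (0.8 * (n : ℝ)) ^ d
  have hcapped : ∑ c ∈ skewCells μ ν, (hookLen μ ν c : ℝ) ^ d ≤
      ∑ j ∈ Icc 1 n, min P ((j : ℝ) ^ d) := calc
    _ = ∑ c ∈ skewCells μ ν, min P ((hookLen μ ν c : ℝ) ^ d) := sum_congr rfl fun c hc =>
        (min_eq_right (pow_le_pow_left₀ (Nat.cast_nonneg _) (hmax c hc).le d)).symm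
    _ ≤ _ := hn ▸ hT.sum_le_sum_Icc fun i j hij => min_le_min_left P <|
        pow_le_pow_left₀ (Nat.cast_nonneg i) (Nat.cast_le.2 hij) d
  have hn_le : (n : ℝ) ≤ ∑ c ∈ skewCells μ ν, (hookLen μ ν c : ℝ) ^ d := by
    simpa [← hn] using card_nsmul_le_sum (skewCells μ ν) (fun c => (hookLen μ ν c : ℝ) ^ d) 1
      fun c hc => one_le_pow₀ (by exact_mod_cast one_le_hookLen hc)
  constructor
  · calc _ < ((n : ℝ) ^ (d + 1) - (0.8 * n) ^ (d + 1)) / (d + 1) - (n - 0.8 * n + 1) * P :=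
          lower_bound_four_fifths hd (by linarith)
      _ ≤ ∑ j ∈ Icc 1 n, ((j : ℝ) ^ d - min P ((j : ℝ) ^ d)) :=
          sub_div_sub_le_sum_Icc_pow_sub_min (by positivity) (by linarith) d
      _ ≤ _ := by rw [sum_sub_distrib]; linarith
  · linarith [sum_Icc_pow_le n d]

/-- If every hook length of the skew shape `μ/ν` of size `n` is less than `0.8 n`,
then for every positive integer `d`,
`n^{d+1}/(26(d+1)) - 2(0.8)^d n^d < ∑_{j=1}^n j^d - ∑_c h_c^d < n^{d+1}/(d+1) + n^d`. -/
theorem power_sum_hook_difference_bounds (μ ν : YoungDiagram) (hνμ : ν ≤ μ)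
    (n : ℕ) (hn : n = (skewCells μ ν).card) (hn1 : 1 ≤ n)
    (hmax : ∀ c ∈ skewCells μ ν, (hookLen μ ν c : ℝ) < 0.8 * n) (d : ℕ) (hd : 1 ≤ d) :
    (n : ℝ) ^ (d + 1) / (26 * (d + 1)) - 2 * (0.8 : ℝ) ^ d * (n : ℝ) ^ d <
        (∑ j ∈ Finset.Icc 1 n, (j : ℝ) ^ d) - ∑ c ∈ skewCells μ ν, (hookLen μ ν c : ℝ) ^ d ∧
      (∑ j ∈ Finset.Icc 1 n, (j : ℝ) ^ d) - ∑ c ∈ skewCells μ ν, (hookLen μ ν c : ℝ) ^ d <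
        (n : ℝ) ^ (d + 1) / (d + 1) + (n : ℝ) ^ d :=
  power_sum_hook_difference_bounds_general μ ν n hn hn1 hmax d hd
end

section
/- For every positive integer d, (1/(d+1))·(1 − (0.8)^{d+1}) − 0.2·(0.8)^d ≥ 1/(26(d+1)). -/
/-! The left-hand side equals `(1 - a d) / (d + 1)` with `a d = 0.8 ^ d * (1 + 0.2 * d)`.
The sequence `a` is antitone, since `a d - a (d + 1) = 0.8 ^ d * 0.2 ^ 2 * (d + 1)`, so for `d ≥ 1`
it is at most `a 1 = 1 - 0.2 ^ 2 = 24 / 25`, and `1 - a d ≥ 1 / 25 > 1 / 26`. -/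

lemma antitone_pow_mul_one_add_sub_mul {x : ℝ} (hx : 0 ≤ x) :
    Antitone fun d : ℕ => x ^ d * (1 + (1 - x) * d) := by
  refine antitone_nat_of_succ_le fun n => ?_
  have hdiff : x ^ n * (1 + (1 - x) * n) - x ^ (n + 1) * (1 + (1 - x) * (n + 1 : ℕ)) =
      x ^ n * (1 - x) ^ 2 * (n + 1) := by
    push_cast; ring
  have : 0 ≤ x ^ n * (1 - x) ^ 2 * (n + 1) := by positivity
  linarith

lemma pow_mul_one_add_sub_mul_le {x : ℝ} (hx : 0 ≤ x) {d : ℕ} (hd : 1 ≤ d) :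
    x ^ d * (1 + (1 - x) * d) ≤ 1 - (1 - x) ^ 2 :=
  calc x ^ d * (1 + (1 - x) * d) ≤ x ^ 1 * (1 + (1 - x) * (1 : ℕ)) :=
        antitone_pow_mul_one_add_sub_mul hx hd
    _ = 1 - (1 - x) ^ 2 := by push_cast; ring

lemma one_div_mul_one_sub_pow_sub_mul_pow {x : ℝ} (d : ℕ) :
    1 / ((d : ℝ) + 1) * (1 - x ^ (d + 1)) - (1 - x) * x ^ d =
      (1 - x ^ d * (1 + (1 - x) * d)) / ((d : ℝ) + 1) := by
  field_simp
  ring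

/-- For every positive integer `d`,
`(1/(d+1))(1 - (0.8)^{d+1}) - 0.2 (0.8)^d ≥ 1/(26(d+1))`. -/
theorem elementary_coefficient_bound (d : ℕ) (hd : 1 ≤ d) :
    (1 / ((d : ℝ) + 1)) * (1 - (0.8 : ℝ) ^ (d + 1)) - (0.2 : ℝ) * (0.8 : ℝ) ^ d ≥
      1 / (26 * ((d : ℝ) + 1)) := by
  have hbound := pow_mul_one_add_sub_mul_le (x := 0.8) (by norm_num) hd
  have hcoeff : (0.2 : ℝ) = 1 - 0.8 := by norm_num
  rw [hcoeff, one_div_mul_one_sub_pow_sub_mul_pow, ge_iff_le, ← div_div]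
  gcongr
  norm_num at hbound ⊢
  linarith
end

section
/- Let U_n be the discrete uniform random variable on {0, 1, ..., n−1}. Then for every d ≥ 1, the d-th cumulant of U_n equals (B_d/d)(n^d − 1), where B_d is the d-th Bernoulli number with B_1 = 1/2. -/
open MeasureTheory ProbabilityTheory

/-- The `d`-th cumulant of a real random variable `X` under measure `μ`:
the `d`-th derivative at `0` of the cumulant generating function `log E[e^{tX}]`. -/
noncomputable def cumulant {Ω : Type*} [MeasurableSpace Ω] (X : Ω → ℝ) (μ : Measure Ω)
    (d : ℕ) : ℝ :=
  iteratedDeriv d (fun t => cgf X μ t) 0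

/-!
With `m(t) = (e^t - 1)/t`, the mgf of `U_n` is `m(nt)/m(t)`, so its cgf is `g(nt) - g(t)` for
`g = log m` and the `d`-th cumulant is `(n^d - 1) g⁽ᵈ⁾(0)`. Now `1 + t g'(t) = t e^t/(e^t - 1)`,
the exponential generating function of the Bernoulli numbers with `B_1 = 1/2`; Leibniz's rule
applied to `(t e^t/(e^t - 1)) (e^t - 1) = t e^t` gives the recurrence `∑_{k<n} C(n,k) B_k = n`
that characterises them, whence `g⁽ᵈ⁾(0) = B_d/d`.
-/

open Real Finset

theorem AnalyticOnNhd.dslope {𝕜 E : Type*} [NontriviallyNormedField 𝕜] [NormedAddCommGroup E]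
    [NormedSpace 𝕜 E] {f : 𝕜 → E} {s : Set 𝕜} {a : 𝕜} (hf : AnalyticOnNhd 𝕜 f s)
    (ha : a ∈ s) :
    AnalyticOnNhd 𝕜 (dslope f a) s := by
  intro b hb
  rcases eq_or_ne b a with rfl | hba
  · obtain ⟨p, hp⟩ := hf b hb
    exact hp.has_fpower_series_dslope_fslope.analyticAt
  · refine AnalyticAt.congr ?_ (dslope_eventuallyEq_slope_of_ne f hba).symm
    simp only [slope_fun_def]
    exact ((analyticAt_id.sub analyticAt_const).inv (sub_ne_zero.2 hba)).smul
      ((hf b hb).sub analyticAt_const)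

theorem iteratedDeriv_succ_fun_id_mul_zero {𝕜 : Type*} [NontriviallyNormedField 𝕜]
    {f : 𝕜 → 𝕜} {k : ℕ} (hf : ContDiffAt 𝕜 (k + 1 : ℕ) f 0) :
    iteratedDeriv (k + 1) (fun t => t * f t) 0 = (k + 1) * iteratedDeriv k f 0 := by
  rw [iteratedDeriv_fun_mul contDiffAt_fun_id hf, sum_eq_single 1]
  · simp [iteratedDeriv_fun_id_zero]
  · intro i _ hi
    simp [iteratedDeriv_fun_id_zero, hi]
  · simp

theorem eq_bernoulli'_of_sum_range_choose_mul {K : Type*} [Field K] [CharZero K] {a : ℕ → K}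
    (ha : ∀ n, ∑ k ∈ range n, (n.choose k : K) * a k = n) (n : ℕ) : a n = bernoulli' n := by
  induction n using Nat.strong_induction_on with
  | _ n ih =>
    have hB : ∑ k ∈ range (n + 1), ((n + 1).choose k : K) * bernoulli' k = (n + 1 : ℕ) := by
      exact_mod_cast sum_bernoulli' (n + 1)
    have h := (ha (n + 1)).trans hB.symm
    rw [sum_range_succ, sum_range_succ, sum_congr rfl fun k hk => by rw [ih k (mem_range.1 hk)],
      add_right_inj, Nat.choose_succ_self_right] at h
    exact mul_left_cancel₀ (Nat.cast_ne_zero.2 n.succ_ne_zero) h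

/-- `(e^t - 1)/t`, with its limit `1` at `t = 0`. -/
noncomputable def expSlope : ℝ → ℝ := dslope exp 0

theorem analyticOnNhd_expSlope : AnalyticOnNhd ℝ expSlope Set.univ :=
  analyticOnNhd_rexp.dslope (Set.mem_univ 0)

theorem mul_expSlope (t : ℝ) : t * expSlope t = exp t - 1 := by
  simpa [expSlope] using sub_smul_dslope exp 0 t

theorem expSlope_zero : expSlope 0 = 1 := by
  simp [expSlope, dslope_same]

theorem expSlope_pos (t : ℝ) : 0 < expSlope t := by
  have h := mul_expSlope t
  rcases lt_trichotomy t 0 with ht | rfl | ht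
  · nlinarith [exp_lt_one_iff.2 ht]
  · simp [expSlope_zero]
  · nlinarith [one_lt_exp_iff.2 ht]

noncomputable def logExpSlope (t : ℝ) : ℝ := log (expSlope t)

theorem analyticOnNhd_logExpSlope : AnalyticOnNhd ℝ logExpSlope Set.univ :=
  fun t _ => (analyticOnNhd_expSlope t trivial).log (expSlope_pos t)

/-- `t e^t/(e^t - 1)`, the exponential generating function of `bernoulli'`. -/
noncomputable def bernoulli'Fun (t : ℝ) : ℝ := exp t / expSlope t

theorem analyticOnNhd_bernoulli'Fun : AnalyticOnNhd ℝ bernoulli'Fun Set.univ :=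
  fun t _ => analyticAt_rexp.div (analyticOnNhd_expSlope t trivial) (expSlope_pos t).ne'

theorem bernoulli'Fun_mul_exp_sub_one (t : ℝ) : bernoulli'Fun t * (exp t - 1) = t * exp t := by
  rw [bernoulli'Fun, ← mul_expSlope]
  field_simp [(expSlope_pos t).ne']

theorem iteratedDeriv_exp_zero (k : ℕ) : iteratedDeriv k exp 0 = 1 := by
  simp [iteratedDeriv_eq_iterate, iter_deriv_exp]

theorem iteratedDeriv_exp_sub_one_zero (k : ℕ) :
    iteratedDeriv k (fun t => exp t - 1) 0 = if k = 0 then 0 else 1 := by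
  cases k with
  | zero => simp
  | succ k =>
    have h : deriv (fun t => exp t - 1) = exp :=
      funext fun t => ((hasDerivAt_exp t).sub_const 1).deriv
    rw [iteratedDeriv_succ', h]
    simp [iteratedDeriv_exp_zero]

theorem sum_range_choose_mul_iteratedDeriv_bernoulli'Fun (n : ℕ) :
    ∑ k ∈ range n, (n.choose k : ℝ) * iteratedDeriv k bernoulli'Fun 0 = n := by
  have h := congrArg (iteratedDeriv n · 0) (funext bernoulli'Fun_mul_exp_sub_one)
  rw [iteratedDeriv_fun_mul (analyticOnNhd_bernoulli'Fun 0 trivial).contDiffAt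
    (contDiff_exp.sub contDiff_const).contDiffAt] at h
  have hrhs : iteratedDeriv n (fun t => t * exp t) 0 = n := by
    cases n with
    | zero => simp
    | succ k =>
      rw [iteratedDeriv_succ_fun_id_mul_zero contDiff_exp.contDiffAt, iteratedDeriv_exp_zero]
      push_cast
      ring
  rw [hrhs, sum_range_succ, Nat.sub_self, iteratedDeriv_exp_sub_one_zero, if_pos rfl, mul_zero,
    add_zero] at h
  rw [← h]
  refine sum_congr rfl fun k hk => ?_
  rw [iteratedDeriv_exp_sub_one_zero, if_neg (by have := mem_range.1 hk; omega), mul_one]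

theorem iteratedDeriv_bernoulli'Fun_zero (k : ℕ) :
    iteratedDeriv k bernoulli'Fun 0 = bernoulli' k :=
  eq_bernoulli'_of_sum_range_choose_mul sum_range_choose_mul_iteratedDeriv_bernoulli'Fun k

theorem one_add_mul_deriv_logExpSlope (t : ℝ) :
    1 + t * deriv logExpSlope t = bernoulli'Fun t := by
  have hm := (analyticOnNhd_expSlope t trivial).differentiableAt.hasDerivAt
  have hslope : expSlope t + t * deriv expSlope t = exp t := by
    have h := (hasDerivAt_id' t).fun_mul hm
    rw [funext mul_expSlope] at h
    simpa using h.unique ((hasDerivAt_exp t).sub_const 1)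
  have hg : HasDerivAt logExpSlope (deriv expSlope t / expSlope t) t :=
    hm.log (expSlope_pos t).ne'
  rw [hg.deriv, bernoulli'Fun, ← hslope]
  field_simp [(expSlope_pos t).ne']

theorem iteratedDeriv_logExpSlope_zero (d : ℕ) :
    iteratedDeriv d logExpSlope 0 = bernoulli' d / d := by
  cases d with
  | zero => simp [logExpSlope, expSlope_zero] -- the right side is `1 / 0 = 0`
  | succ k =>
    have h := iteratedDeriv_succ_fun_id_mul_zero (k := k)
      (analyticOnNhd_logExpSlope.deriv 0 trivial).contDiffAt
    rw [← iteratedDeriv_succ', ← iteratedDeriv_const_add k.succ_pos 1,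
      funext one_add_mul_deriv_logExpSlope, iteratedDeriv_bernoulli'Fun_zero] at h
    rw [h]
    field_simp
    push_cast
    ring

theorem sum_exp_mul_mul_expSlope (n : ℕ) (t : ℝ) :
    (∑ k ∈ range n, exp (t * k)) * expSlope t = n * expSlope (n * t) := by
  rcases eq_or_ne t 0 with rfl | ht
  · simp [expSlope_zero]
  apply mul_left_cancel₀ ht
  have hgeom : ∑ k ∈ range n, exp (t * k) = ∑ k ∈ range n, exp t ^ k :=
    sum_congr rfl fun k _ => by rw [← exp_nat_mul, mul_comm]
  calc t * ((∑ k ∈ range n, exp (t * k)) * expSlope t)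
      = (∑ k ∈ range n, exp t ^ k) * (exp t - 1) := by
        rw [hgeom, ← mul_expSlope]
        ring
    _ = (n * t) * expSlope (n * t) := by rw [geom_sum_mul, mul_expSlope, exp_nat_mul]
    _ = t * (n * expSlope (n * t)) := by ring

theorem mgf_id_uniform (n : ℕ) (t : ℝ) :
    mgf id ((n : ENNReal)⁻¹ • ∑ k ∈ range n, Measure.dirac (k : ℝ)) t =
      (n : ℝ)⁻¹ * ∑ k ∈ range n, exp (t * k) := by
  rw [mgf, integral_smul_measure,
    integral_finsetSum_measure fun k _ => integrable_dirac enorm_lt_top]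
  simp [integral_dirac]

theorem cgf_id_uniform {n : ℕ} (hn : n ≠ 0) (t : ℝ) :
    cgf id ((n : ENNReal)⁻¹ • ∑ k ∈ range n, Measure.dirac (k : ℝ)) t =
      logExpSlope (n * t) - logExpSlope t := by
  have hS := sum_exp_mul_mul_expSlope n t
  rw [cgf, mgf_id_uniform, logExpSlope, logExpSlope,
    ← log_div (expSlope_pos _).ne' (expSlope_pos _).ne']
  congr 1
  field_simp [(expSlope_pos t).ne']
  linarith

theorem cumulant_discrete_uniform_general (n : ℕ) (hn : 1 ≤ n) (d : ℕ) :
    cumulant id ((n : ENNReal)⁻¹ • ∑ k ∈ Finset.range n, Measure.dirac (k : ℝ)) d =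
      (bernoulli' d : ℝ) / d * ((n : ℝ) ^ d - 1) := by
  have hg : ContDiff ℝ d logExpSlope := analyticOnNhd_logExpSlope.contDiff
  have hgn : ContDiff ℝ d fun t => logExpSlope (n * t) := hg.comp (by fun_prop)
  simp_rw [cumulant, cgf_id_uniform (Nat.one_le_iff_ne_zero.1 hn)]
  rw [iteratedDeriv_fun_sub hgn.contDiffAt hg.contDiffAt, iteratedDeriv_comp_const_mul hg]
  simp only [mul_zero, iteratedDeriv_logExpSlope_zero]
  ring

/-- For the discrete uniform random variable `U_n` on `{0, 1, …, n-1}` and every `d ≥ 1`,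
the `d`-th cumulant equals `(B_d/d)(n^d - 1)`, Bernoulli convention `B_1 = 1/2`. -/
theorem cumulant_discrete_uniform (n : ℕ) (hn : 1 ≤ n) (d : ℕ) (hd : 1 ≤ d) :
    cumulant id ((n : ENNReal)⁻¹ • ∑ k ∈ Finset.range n, Measure.dirac (k : ℝ)) d =
      (bernoulli' d : ℝ) / d * ((n : ℝ) ^ d - 1) :=
  cumulant_discrete_uniform_general n hn d
end

section
/- The normalized d-th cumulant of baj − inv on S_n has absolute value Θ(n^{1−d/2}), uniformly in n, for each fixed d ∈ {1, 2, 4, 6, ...}: there exist constants c, C > 0 depending only on d with c·n^{1−d/2} ≤ |κ_d^n / (κ_2^n)^{d/2}| ≤ C·n^{1−d/2}. -/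
open Finset

/-! The sum `∑_{i=1}^{n-1} ((i(n-i))^d - i^d)` has order `n^(2d+1)`: each summand is at most
`n^(2d)`, and the `n/3` summands with `n/3 ≤ i < 2n/3` are each at least `(n/3)^(2d)`.
For `d = 1` or `d` even the Bernoulli number `B_d` is nonzero (for even `d` because `ζ(d) ≠ 0`),
so `|κ_d^n| ≍ n^(2d+1)`, `κ_2^n ≍ n^5`, and `κ_d^n / (κ_2^n)^(d/2) ≍ n^(2d+1-5d/2) = n^(1-d/2)`. -/

/-- The `d`-th cumulant of `baj - inv` on `S_n`:
`κ_d^n = (B_d/d) ∑_{i=1}^{n-1} ((i(n-i))^d - i^d)`, Bernoulli convention `B_1 = 1/2`. -/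
noncomputable def bajInvCumulant (d n : ℕ) : ℝ :=
  ((bernoulli' d : ℝ) / d) *
    ∑ i ∈ Finset.Icc 1 (n - 1), (((i : ℝ) * ((n : ℝ) - (i : ℝ))) ^ d - (i : ℝ) ^ d)

theorem bernoulli'_ne_zero_of_even {d : ℕ} (hd : Even d) (hd0 : d ≠ 0) : bernoulli' d ≠ 0 := by
  obtain ⟨k, rfl⟩ := hd
  have hk : k ≠ 0 := by omega
  rw [← two_mul, ← bernoulli_eq_bernoulli'_of_ne_one (by omega)]
  intro h
  apply riemannZeta_ne_zero_of_one_lt_re (s := 2 * k) (by simp; norm_cast; omega)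
  simp [riemannZeta_two_mul_nat hk, h]

-- The sum in `bajInvCumulant`, taken in `ℕ`: its summands are natural numbers as `i < n`.
def bajInvPowerSum (d n : ℕ) : ℕ := ∑ i ∈ Icc 1 (n - 1), ((i * (n - i)) ^ d - i ^ d)

theorem bajInvCumulant_eq (d n : ℕ) :
    bajInvCumulant d n = bernoulli' d / d * bajInvPowerSum d n := by
  rw [bajInvCumulant, bajInvPowerSum, Nat.cast_sum]
  congr 1
  refine sum_congr rfl fun i hi => ?_
  have hin : i < n := by rw [mem_Icc] at hi; omega
  have hpow : i ^ d ≤ (i * (n - i)) ^ d :=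
    Nat.pow_le_pow_left (Nat.le_mul_of_pos_right i (by omega)) d
  push_cast [Nat.cast_sub hpow, Nat.cast_sub hin.le]
  rfl

theorem bajInvPowerSum_le (d n : ℕ) : bajInvPowerSum d n ≤ n ^ (2 * d + 1) := by
  calc bajInvPowerSum d n ≤ ∑ _i ∈ Icc 1 (n - 1), n ^ (2 * d) := sum_le_sum fun i hi => ?_
    _ ≤ n * n ^ (2 * d) := by rw [sum_const, smul_eq_mul, Nat.card_Icc]; gcongr; omega
    _ = n ^ (2 * d + 1) := by ring
  rw [mem_Icc] at hi
  calc (i * (n - i)) ^ d - i ^ d ≤ (i * (n - i)) ^ d := Nat.sub_le _ _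
    _ ≤ (n * n) ^ d := by gcongr <;> omega
    _ = n ^ (2 * d) := by ring

theorem pow_le_bajInvPowerSum {d : ℕ} (hd : d ≠ 0) (n : ℕ) :
    (n / 3) ^ (2 * d + 1) ≤ bajInvPowerSum d n := by
  set m := n / 3
  have hterm : ∀ i ∈ Ico m (2 * m), m ^ (2 * d) ≤ (i * (n - i)) ^ d - i ^ d := by
    intro i hi
    rw [mem_Ico] at hi
    have hsucc : m ^ d + 1 ≤ (n - i) ^ d :=
      (Nat.pow_lt_pow_left m.lt_succ_self hd).trans_le (Nat.pow_le_pow_left (by omega) d)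
    calc m ^ (2 * d) = m ^ d * m ^ d := by ring
      _ ≤ i ^ d * ((n - i) ^ d - 1) := by gcongr <;> omega
      _ = (i * (n - i)) ^ d - i ^ d := by rw [mul_pow, Nat.mul_sub_one]
  calc (n / 3) ^ (2 * d + 1) = #(Ico m (2 * m)) • m ^ (2 * d) := by
          rw [Nat.card_Ico, smul_eq_mul, show 2 * m - m = m by omega]; ring
    _ ≤ ∑ i ∈ Ico m (2 * m), ((i * (n - i)) ^ d - i ^ d) := card_nsmul_le_sum _ _ _ hterm
    _ ≤ bajInvPowerSum d n :=
        sum_le_sum_of_subset fun i hi => by simp only [mem_Ico, mem_Icc] at *; omega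

theorem pow_le_five_pow_mul_bajInvPowerSum {d n : ℕ} (hd : d ≠ 0) (hn : 3 ≤ n) :
    n ^ (2 * d + 1) ≤ 5 ^ (2 * d + 1) * bajInvPowerSum d n :=
  calc n ^ (2 * d + 1) ≤ (5 * (n / 3)) ^ (2 * d + 1) := Nat.pow_le_pow_left (by omega) _
    _ = 5 ^ (2 * d + 1) * (n / 3) ^ (2 * d + 1) := mul_pow _ _ _
    _ ≤ 5 ^ (2 * d + 1) * bajInvPowerSum d n := Nat.mul_le_mul_left _ (pow_le_bajInvPowerSum hd n)

theorem abs_bajInvCumulant_mem_Icc {d n : ℕ} (hd : d ≠ 0) (hn : 3 ≤ n) :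
    |bajInvCumulant d n| ∈ Set.Icc (|(bernoulli' d : ℝ)| / d / 5 ^ (2 * d + 1) * n ^ (2 * d + 1))
      (|(bernoulli' d : ℝ)| / d * n ^ (2 * d + 1)) := by
  rw [bajInvCumulant_eq, abs_mul, abs_div, Nat.abs_cast, Nat.abs_cast]
  obtain ⟨hlo, hhi⟩ : (n : ℝ) ^ (2 * d + 1) ≤ 5 ^ (2 * d + 1) * bajInvPowerSum d n ∧
      (bajInvPowerSum d n : ℝ) ≤ n ^ (2 * d + 1) :=
    ⟨mod_cast pow_le_five_pow_mul_bajInvPowerSum hd hn, mod_cast bajInvPowerSum_le d n⟩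
  constructor
  · calc |(bernoulli' d : ℝ)| / d / 5 ^ (2 * d + 1) * n ^ (2 * d + 1)
          = |(bernoulli' d : ℝ)| / d * (n ^ (2 * d + 1) / 5 ^ (2 * d + 1)) := by ring
      _ ≤ |(bernoulli' d : ℝ)| / d * bajInvPowerSum d n := by
          gcongr; rw [div_le_iff₀ (by positivity)]; linarith
  · gcongr

theorem bajInvCumulant_two_mem_Icc {n : ℕ} (hn : 3 ≤ n) :
    bajInvCumulant 2 n ∈ Set.Icc (1 / (12 * 5 ^ 5) * (n : ℝ) ^ 5) (1 / 12 * (n : ℝ) ^ 5) := by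
  have hnonneg : 0 ≤ bajInvCumulant 2 n := by rw [bajInvCumulant_eq, bernoulli'_two]; positivity
  have h := abs_bajInvCumulant_mem_Icc two_ne_zero hn
  rw [abs_of_nonneg hnonneg, bernoulli'_two] at h
  convert h using 3 <;> norm_num

theorem div_rpow_mem_Icc_mul_rpow {x S T a A b B r : ℝ} {p q : ℕ} (hx : 0 < x) (ha : 0 ≤ a)
    (hb : 0 < b) (hr : 0 ≤ r) (hS : S ∈ Set.Icc (a * x ^ p) (A * x ^ p))
    (hT : T ∈ Set.Icc (b * x ^ q) (B * x ^ q)) :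
    S / T ^ r ∈
      Set.Icc (a / B ^ r * x ^ ((p : ℝ) - q * r)) (A / b ^ r * x ^ ((p : ℝ) - q * r)) := by
  have hTpos : 0 < T := (by positivity : 0 < b * x ^ q).trans_le hT.1
  have hBpos : 0 < B := pos_of_mul_pos_left (hTpos.trans_le hT.2) (by positivity)
  have hS0 : 0 ≤ S := (by positivity : 0 ≤ a * x ^ p).trans hS.1
  have hscale : ∀ c e : ℝ, 0 < e →
      c / e ^ r * x ^ ((p : ℝ) - q * r) = c * x ^ p / (e * x ^ q) ^ r := by
    intro c e he
    rw [Real.mul_rpow he.le (by positivity), ← Real.rpow_natCast x q, ← Real.rpow_mul hx.le,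
      Real.rpow_sub hx, Real.rpow_natCast]
    field_simp
  rw [hscale a B hBpos, hscale A b hb]
  exact ⟨div_le_div₀ hS0 hS.1 (by positivity) (Real.rpow_le_rpow hTpos.le hT.2 hr),
    div_le_div₀ (hS0.trans hS.2) hS.2 (by positivity) (Real.rpow_le_rpow (by positivity) hT.1 hr)⟩

/-- For each fixed `d ∈ {1, 2, 4, 6, …}`, the normalized `d`-th cumulant of `baj - inv`
on `S_n` has absolute value `Θ(n^{1-d/2})`, uniformly in `n`: there are constants
`c, C > 0` depending only on `d` with
`c n^{1-d/2} ≤ |κ_d^n / (κ_2^n)^{d/2}| ≤ C n^{1-d/2}`. -/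
theorem bajInv_normalized_cumulant_theta (d : ℕ) (hd : d = 1 ∨ Even d) (hd1 : 1 ≤ d) :
    ∃ c C : ℝ, 0 < c ∧ 0 < C ∧ ∀ n : ℕ, 3 ≤ n →
      c * (n : ℝ) ^ ((1 : ℝ) - (d : ℝ) / 2) ≤
        |bajInvCumulant d n / (bajInvCumulant 2 n) ^ ((d : ℝ) / 2)| ∧
      |bajInvCumulant d n / (bajInvCumulant 2 n) ^ ((d : ℝ) / 2)| ≤
        C * (n : ℝ) ^ ((1 : ℝ) - (d : ℝ) / 2) := by
  have hd0 : d ≠ 0 := by omega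
  have hB : (bernoulli' d : ℝ) ≠ 0 := by
    rcases hd with rfl | he
    · norm_num [bernoulli'_one]
    · exact_mod_cast bernoulli'_ne_zero_of_even he hd0
  set β : ℝ := |(bernoulli' d : ℝ)| / d
  have hβ : 0 < β := div_pos (abs_pos.2 hB) (by positivity)
  refine ⟨β / 5 ^ (2 * d + 1) / (1 / 12) ^ ((d : ℝ) / 2), β / (1 / (12 * 5 ^ 5)) ^ ((d : ℝ) / 2),
    by positivity, by positivity, fun n hn => ?_⟩
  have hκ2 := bajInvCumulant_two_mem_Icc hn
  have h := div_rpow_mem_Icc_mul_rpow (by positivity) (by positivity) (by norm_num)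
    (by positivity : (0 : ℝ) ≤ d / 2) (abs_bajInvCumulant_mem_Icc hd0 hn) hκ2
  have hexp : ((2 * d + 1 : ℕ) : ℝ) - (5 : ℕ) * ((d : ℝ) / 2) = 1 - d / 2 := by push_cast; ring
  rw [hexp] at h
  rwa [abs_div, abs_of_nonneg (Real.rpow_nonneg ((by positivity : (0 : ℝ) ≤ _).trans hκ2.1) _)]
end
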